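/- arXiv:2212.05355 — 2 statements merged into one kernel-verified Lean document; each statement's English description precedes it below -/
import Mathlib

section
/- Let r ∈ R^p, δ ≥ 0, ε > 0, and define f_ε : R^p → R by f_ε(x) = 1 if |w| ≤ δ, f_ε(x) = (w+δ+ε)/ε if −δ−ε < w ≤ −δ, f_ε(x) = (δ+ε−w)/ε if δ < w ≤ δ+ε, and f_ε(x) = 0 otherwise, where w = max_{k ∈ [p]} (x^{(k)} − r^{(k)}). Then f_ε is Lipschitz, satisfies 0 ≤ f_ε ≤ 1, f_ε(x) ≥ 1{x ∈ A_{r,δ}}, and at every point of differentiability the ℓ1 norm of its gradient equals (1/ε)·(1{x ∈ A_{r−(δ+ε/2)·1, ε/2}} + 1{x ∈ A_{r+(δ+ε/2)·1, ε/2}}). -/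
open MeasureTheory ProbabilityTheory Real
open scoped Classical

noncomputable def stdGaussian (ι : Type*) [Fintype ι] : Measure (ι → ℝ) :=
  Measure.pi (fun _ => gaussianReal 0 1)

def slab {p : ℕ} (r : Fin p → ℝ) (δ : ℝ) : Set (Fin p → ℝ) :=
  {x | ∀ k, x k ≤ r k + δ} \ {x | ∀ k, x k ≤ r k - δ}

noncomputable def kdist {Ω : Type*} [MeasurableSpace Ω] (P : Measure Ω) {p : ℕ}
    (U V : Ω → Fin p → ℝ) : ℝ :=
  ⨆ r : Fin p → ℝ,
    |(P {ω | ∀ k, U ω k ≤ r k}).toReal - (P {ω | ∀ k, V ω k ≤ r k}).toReal|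

def IsCenteredGaussianLaw {Ω : Type*} [MeasurableSpace Ω] (P : Measure Ω)
    {ι : Type*} [Fintype ι] (Y : Ω → ι → ℝ) (S : Matrix ι ι ℝ) : Prop :=
  ∃ A : Matrix ι ι ℝ, S = A * A.transpose ∧
    Measure.map Y P = Measure.map (fun z => A.mulVec z) (stdGaussian ι)

noncomputable def covM {Ω : Type*} [MeasurableSpace Ω] (P : Measure Ω) {p : ℕ}
    (U V : Ω → Fin p → ℝ) : Matrix (Fin p) (Fin p) ℝ :=
  Matrix.of fun a b => ∫ ω, U ω a * V ω b ∂P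

noncomputable def Spre {Ω : Type*} {n p : ℕ} (X : Fin n → Ω → Fin p → ℝ) (i : ℕ) :
    Ω → Fin p → ℝ :=
  fun ω a => ∑ k ∈ Finset.univ.filter (fun k : Fin n => (k : ℕ) < i), X k ω a

noncomputable def Sblk {Ω : Type*} {n p : ℕ} (X : Fin n → Ω → Fin p → ℝ) (a b : ℕ) :
    Ω → Fin p → ℝ :=
  fun ω j => ∑ k ∈ Finset.univ.filter (fun k : Fin n => a ≤ (k : ℕ) ∧ (k : ℕ) ≤ b), X k ω j

def Gpast {Ω : Type*} [MeasurableSpace Ω] {n p : ℕ} (X : Fin n → Ω → Fin p → ℝ) (i : ℕ) :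
    MeasurableSpace Ω :=
  ⨆ k : Fin n, ⨆ _ : i ≤ (k : ℕ), MeasurableSpace.comap (X k) inferInstance

def CondACBound {Ω : Type*} [MeasurableSpace Ω] {n p : ℕ} (P : Measure Ω)
    (X : Fin n → Ω → Fin p → ℝ) (i : ℕ) (δ K : ℝ) : Prop :=
  ∀ r : Ω → Fin p → ℝ, Measurable[Gpast X i] r →
    ∀ᵐ ω ∂P,
      (P[Set.indicator {ω' | Spre X i ω' ∈ slab (r ω') δ} (fun _ => (1:ℝ)) | Gpast X i]) ω ≤ K

noncomputable def wfun {p : ℕ} (r x : Fin p → ℝ) : ℝ := ⨆ k, (x k - r k)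

noncomputable def fcut {p : ℕ} (r : Fin p → ℝ) (δ ε : ℝ) (x : Fin p → ℝ) : ℝ :=
  if |wfun r x| ≤ δ then 1
  else if -δ - ε < wfun r x ∧ wfun r x ≤ -δ then (wfun r x + δ + ε) / ε
  else if δ < wfun r x ∧ wfun r x ≤ δ + ε then (δ + ε - wfun r x) / ε
  else 0

/-!
Write `w = wfun r x`. Then `fcut r δ ε x = h w` for the trapezoidal profile
`h w = max 0 (min 1 ((δ + ε - |w|) / ε))`, and `wfun r` is `1`-Lipschitz, so the first three
claims are properties of `h`.

For the gradient, `wfun r (x + t • 1) = w + t`, so differentiability of `f = h ∘ wfun r` at `x`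
forces differentiability of `h` at `w`, with `h' w = Df(x) 1 = ∑ₖ ∂ₖ f(x)`. Since `wfun r` is
monotone in each coordinate and `h` is monotone or antitone on a right neighbourhood of `w`, all
partial derivatives `∂ₖ f(x)` have the same sign, hence `∑ₖ |∂ₖ f(x)| = |h' w|`. Finally, where `h`
is differentiable, `h' w` is its left derivative, whose modulus is `1 / ε` exactly on
`(-δ - ε, -δ]` and `(δ, δ + ε]`; these are the two slabs of the statement.
-/

open Set

lemma deriv_eq_of_eq_affine_on_Ioc {f : ℝ → ℝ} {a w m c : ℝ} (hd : DifferentiableAt ℝ f w)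
    (haw : a < w) (hf : ∀ t ∈ Ioc a w, f t = m * t + c) : deriv f w = m := by
  have hline : HasDerivAt (fun t => m * t + c) m w := by
    simpa using ((hasDerivAt_id w).const_mul m).add_const c
  exact (uniqueDiffWithinAt_Iic w).eq_deriv _ hd.hasDerivAt.hasDerivWithinAt
    (hline.hasDerivWithinAt.congr_of_eventuallyEq
      (Filter.eventually_of_mem (Ioc_mem_nhdsLE haw) hf) (hf w ⟨haw, le_rfl⟩))

section wfun

variable {p : ℕ}

lemma wfun_mono (r : Fin p → ℝ) : Monotone (wfun r) := fun _ _ hxy =>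
  ciSup_mono (finite_range _).bddAbove fun k => sub_le_sub_right (hxy k) _

lemma sub_le_wfun (r x : Fin p → ℝ) (k : Fin p) : x k - r k ≤ wfun r x :=
  le_ciSup (f := fun k => x k - r k) (finite_range _).bddAbove k

variable [Nonempty (Fin p)]

lemma wfun_le_iff {r x : Fin p → ℝ} {c : ℝ} : wfun r x ≤ c ↔ ∀ k, x k ≤ r k + c := by
  rw [wfun, ciSup_le_iff (finite_range _).bddAbove]
  exact forall_congr' fun k => sub_le_iff_le_add'

lemma mem_slab_iff {r x : Fin p → ℝ} {c : ℝ} :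
    x ∈ slab r c ↔ -c < wfun r x ∧ wfun r x ≤ c := by
  have hlow : (∀ k, x k ≤ r k - c) ↔ wfun r x ≤ -c := by
    simp only [wfun_le_iff, sub_eq_add_neg]
  rw [slab, mem_sdiff, mem_ofPred_eq, mem_ofPred_eq, hlow, ← wfun_le_iff, not_le, and_comm]

lemma wfun_add_smul_one (r x : Fin p → ℝ) (c : ℝ) : wfun r (x + c • 1) = wfun r x + c := by
  rw [wfun, wfun, ciSup_add (finite_range _).bddAbove]
  simp only [Pi.add_apply, Pi.smul_apply, Pi.one_apply, smul_eq_mul, mul_one, add_sub_right_comm]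

lemma wfun_add_const_left (r x : Fin p → ℝ) (c : ℝ) :
    wfun (fun k => r k + c) x = wfun r x - c := by
  rw [wfun, wfun, ciSup_sub (finite_range _).bddAbove]
  simp only [sub_add_eq_sub_sub]

lemma wfun_sub_const_left (r x : Fin p → ℝ) (c : ℝ) :
    wfun (fun k => r k - c) x = wfun r x + c := by
  rw [wfun, wfun, ciSup_add (finite_range _).bddAbove]
  simp only [sub_sub_eq_add_sub, add_sub_right_comm]

lemma wfun_lipschitz (r : Fin p → ℝ) : LipschitzWith 1 (wfun r) :=
  LipschitzWith.of_le_add fun x y => wfun_le_iff.2 fun k => by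
    have hy := sub_le_wfun r y k
    have hxy : x k - y k ≤ dist x y :=
      (le_abs_self _).trans ((Real.dist_eq _ _).symm.trans_le (dist_le_pi_dist x y k))
    linarith

lemma wfun_add_smul_single_mem_Icc (r x : Fin p → ℝ) (k : Fin p) {t : ℝ} (ht : 0 ≤ t) :
    wfun r (x + t • Pi.single k 1) ∈ Icc (wfun r x) (wfun r x + t) := by
  have hsingle : ∀ j, 0 ≤ t * (Pi.single k 1 : Fin p → ℝ) j ∧
      t * (Pi.single k 1 : Fin p → ℝ) j ≤ t := fun j => by
    rw [Pi.single_apply]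
    split_ifs <;> simp [ht]
  refine ⟨wfun_mono r fun j => ?_, ?_⟩
  · simpa using (hsingle j).1
  · rw [← wfun_add_smul_one]
    exact wfun_mono r fun j => by simpa using (hsingle j).2

end wfun

noncomputable def trapezoid (δ ε w : ℝ) : ℝ := max 0 (min 1 ((δ + ε - |w|) / ε))

section trapezoid

variable {δ ε : ℝ}

lemma fcut_eq_trapezoid {p : ℕ} (hδ : 0 ≤ δ) (hε : 0 < ε) (r x : Fin p → ℝ) :
    fcut r δ ε x = trapezoid δ ε (wfun r x) := by
  rw [fcut, trapezoid]
  generalize wfun r x = w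
  split_ifs with hone hleft hright
  · rw [min_eq_left ((le_div_iff₀ hε).2 (by linarith)), max_eq_right zero_le_one]
  · rw [abs_of_nonpos (by linarith), sub_neg_eq_add, add_comm (δ + ε) w, ← add_assoc,
      min_eq_right ((div_le_one hε).2 (by linarith)), max_eq_right (div_nonneg (by linarith) hε.le)]
  · rw [abs_of_nonneg (by linarith), min_eq_right ((div_le_one hε).2 (by linarith)),
      max_eq_right (div_nonneg (by linarith) hε.le)]
  · have : δ + ε ≤ |w| := by
      rw [not_le, lt_abs] at hone
      rw [not_and_or, not_lt, not_le] at hleft hright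
      rcases hone with hw | hw <;> [rw [abs_of_pos (by linarith)]; rw [abs_of_neg (by linarith)]]
      · rcases hright with h | h <;> linarith
      · rcases hleft with h | h <;> linarith
    rw [max_eq_left (min_le_of_right_le (div_nonpos_of_nonpos_of_nonneg (by linarith) hε.le))]

lemma trapezoid_nonneg (w : ℝ) : 0 ≤ trapezoid δ ε w := le_max_left _ _

lemma trapezoid_le_one (w : ℝ) : trapezoid δ ε w ≤ 1 := max_le zero_le_one (min_le_left _ _)

lemma trapezoid_eq_one (hε : 0 < ε) {w : ℝ} (hw : |w| ≤ δ) : trapezoid δ ε w = 1 := by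
  rw [trapezoid, min_eq_left ((le_div_iff₀ hε).2 (by linarith)), max_eq_right zero_le_one]

lemma trapezoid_lipschitz (hε : 0 < ε) : LipschitzWith (Real.toNNReal ε⁻¹) (trapezoid δ ε) := by
  have hlin : LipschitzWith (Real.toNNReal ε⁻¹) fun w : ℝ => (δ + ε - |w|) / ε :=
    LipschitzWith.of_dist_le' fun a b => by
      rw [Real.dist_eq, Real.dist_eq, ← sub_div, abs_div, abs_of_pos hε, div_eq_inv_mul,
        sub_sub_sub_cancel_left, abs_sub_comm]
      exact mul_le_mul_of_nonneg_left (abs_abs_sub_abs_le_abs_sub a b) (by positivity)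
  have := ((LipschitzWith.id.const_min 1).const_max 0).comp hlin
  rwa [one_mul] at this

lemma trapezoid_monotoneOn (hε : 0 < ε) : MonotoneOn (trapezoid δ ε) (Iic 0) := by
  intro a _ b hb hab
  have habs : |b| ≤ |a| := by
    rw [abs_of_nonpos hb, abs_of_nonpos (hab.trans hb)]
    exact neg_le_neg hab
  unfold trapezoid
  gcongr

lemma trapezoid_antitoneOn (hε : 0 < ε) : AntitoneOn (trapezoid δ ε) (Ici 0) := by
  intro a ha b _ hab
  have habs : |a| ≤ |b| := by rwa [abs_of_nonneg ha, abs_of_nonneg (ha.trans hab)]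
  unfold trapezoid
  gcongr

lemma trapezoid_monotoneOn_or_antitoneOn_Icc (hε : 0 < ε) (w : ℝ) :
    ∃ η > 0, MonotoneOn (trapezoid δ ε) (Icc w (w + η)) ∨
      AntitoneOn (trapezoid δ ε) (Icc w (w + η)) := by
  rcases lt_or_ge w 0 with hw | hw
  · refine ⟨-w, neg_pos.2 hw, Or.inl ((trapezoid_monotoneOn hε).mono fun t ht => ?_)⟩
    exact (ht.2.trans (add_neg_cancel w).le : t ≤ 0)
  · exact ⟨1, one_pos, Or.inr ((trapezoid_antitoneOn hε).mono fun t ht => hw.trans ht.1)⟩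

lemma trapezoid_eq_zero (hε : 0 < ε) {w : ℝ} (hw : δ + ε ≤ |w|) : trapezoid δ ε w = 0 :=
  max_eq_left (min_le_of_right_le (div_nonpos_of_nonpos_of_nonneg (by linarith) hε.le))

lemma trapezoid_eq_of_abs_mem_Icc (hε : 0 < ε) {w : ℝ} (hw : |w| ∈ Icc δ (δ + ε)) :
    trapezoid δ ε w = (δ + ε - |w|) / ε := by
  rw [trapezoid, min_eq_right ((div_le_one hε).2 (by linarith [hw.1])),
    max_eq_right (div_nonneg (by linarith [hw.2]) hε.le)]

lemma abs_deriv_trapezoid (hδ : 0 ≤ δ) (hε : 0 < ε) {w : ℝ}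
    (hd : DifferentiableAt ℝ (trapezoid δ ε) w) :
    |deriv (trapezoid δ ε) w| =
      1 / ε * ((if -δ - ε < w ∧ w ≤ -δ then 1 else 0) + (if δ < w ∧ w ≤ δ + ε then 1 else 0)) := by
  rcases le_or_gt w (-δ - ε) with h1 | h1
  · rw [deriv_eq_of_eq_affine_on_Ioc hd (a := w - 1) (c := 0) (m := 0) (by linarith) fun t ht => by
      rw [trapezoid_eq_zero hε (by rw [abs_of_neg (by linarith [ht.2])]; linarith [ht.2]),
        zero_mul, add_zero],
      if_neg (by intro h; linarith [h.1]), if_neg (by intro h; linarith [h.1])]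
    simp
  rcases le_or_gt w (-δ) with h2 | h2
  · rw [deriv_eq_of_eq_affine_on_Ioc hd (m := ε⁻¹) (c := (δ + ε) / ε) h1 fun t ht => by
      have habs : |t| = -t := abs_of_nonpos (by linarith [ht.2])
      rw [trapezoid_eq_of_abs_mem_Icc hε (by rw [habs]; constructor <;> linarith [ht.1, ht.2]),
        habs]
      field_simp
      ring,
      if_pos ⟨h1, h2⟩, if_neg (by intro h; linarith [h.1])]
    simp [abs_of_pos hε]
  rcases le_or_gt w δ with h3 | h3
  · rw [deriv_eq_of_eq_affine_on_Ioc hd (m := 0) (c := 1) h2 fun t ht => by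
      rw [trapezoid_eq_one hε (abs_le.2 ⟨ht.1.le, ht.2.trans h3⟩), zero_mul, zero_add],
      if_neg (by intro h; linarith [h.2]), if_neg (by intro h; linarith [h.1])]
    simp
  rcases le_or_gt w (δ + ε) with h4 | h4
  · rw [deriv_eq_of_eq_affine_on_Ioc hd (m := -ε⁻¹) (c := (δ + ε) / ε) h3 fun t ht => by
      have habs : |t| = t := abs_of_nonneg (by linarith [ht.1])
      rw [trapezoid_eq_of_abs_mem_Icc hε (by rw [habs]; constructor <;> linarith [ht.1, ht.2]),
        habs]
      field_simp
      ring,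
      if_neg (by intro h; linarith [h.2]), if_pos ⟨h3, h4⟩]
    simp [abs_of_pos hε]
  · rw [deriv_eq_of_eq_affine_on_Ioc hd (m := 0) (c := 0) h4 fun t ht => by
      rw [trapezoid_eq_zero hε (by rw [abs_of_pos (by linarith [ht.1])]; linarith [ht.1]),
        zero_mul, add_zero],
      if_neg (by intro h; linarith [h.2]), if_neg (by intro h; linarith [h.2])]
    simp

end trapezoid

section comp_wfun

variable {p : ℕ} [Nonempty (Fin p)] {h : ℝ → ℝ} {r x : Fin p → ℝ}

lemma hasDerivAt_of_differentiableAt_comp_wfun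
    (hd : DifferentiableAt ℝ (fun y => h (wfun r y)) x) :
    HasDerivAt h (fderiv ℝ (fun y => h (wfun r y)) x 1) (wfun r x) := by
  have hdiag : HasDerivAt (fun t => h (wfun r x + t))
      (fderiv ℝ (fun y => h (wfun r y)) x 1) 0 := by
    have : HasDerivAt (fun t : ℝ => h (wfun r (x + t • 1)))
        (fderiv ℝ (fun y => h (wfun r y)) x 1) 0 := hd.hasFDerivAt.hasLineDerivAt 1
    simpa only [wfun_add_smul_one] using this
  have := HasDerivAt.comp_sub_const (wfun r x) (wfun r x) (by rwa [sub_self])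
  simp only [add_sub_cancel] at this
  exact this

lemma fderiv_comp_wfun_single_nonneg {η : ℝ} (hη : 0 < η)
    (hmono : MonotoneOn h (Icc (wfun r x) (wfun r x + η)))
    (hd : DifferentiableAt ℝ (fun y => h (wfun r y)) x) (k : Fin p) :
    0 ≤ fderiv ℝ (fun y => h (wfun r y)) x (Pi.single k 1) := by
  have hline : HasDerivAt (fun t : ℝ => h (wfun r (x + t • Pi.single k 1)))
      (fderiv ℝ (fun y => h (wfun r y)) x (Pi.single k 1)) 0 :=
    hd.hasFDerivAt.hasLineDerivAt _
  have hmono' : MonotoneOn (fun t : ℝ => h (wfun r (x + t • Pi.single k 1))) (Icc 0 η) := by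
    intro s hs t ht hst
    have hmem : ∀ u ∈ Icc 0 η, wfun r (x + u • Pi.single k 1) ∈ Icc (wfun r x) (wfun r x + η) :=
      fun u hu => Icc_subset_Icc_right (by linarith [hu.2])
        (wfun_add_smul_single_mem_Icc r x k hu.1)
    refine hmono (hmem s hs) (hmem t ht) (wfun_mono r fun j => ?_)
    have : 0 ≤ (Pi.single k 1 : Fin p → ℝ) j := by rw [Pi.single_apply]; split_ifs <;> norm_num
    simpa using mul_le_mul_of_nonneg_right hst this
  rw [← hline.hasDerivWithinAt.derivWithin (uniqueDiffOn_Icc hη 0 (left_mem_Icc.2 hη.le))]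
  exact hmono'.derivWithin_nonneg

lemma sum_abs_fderiv_comp_wfun_of_monotoneOn {η : ℝ} (hη : 0 < η)
    (hmono : MonotoneOn h (Icc (wfun r x) (wfun r x + η)))
    (hd : DifferentiableAt ℝ (fun y => h (wfun r y)) x) :
    ∑ k, |fderiv ℝ (fun y => h (wfun r y)) x (Pi.single k 1)| = deriv h (wfun r x) := by
  rw [(hasDerivAt_of_differentiableAt_comp_wfun hd).deriv, ← Finset.univ_sum_single 1, map_sum]
  exact Finset.sum_congr rfl fun k _ => abs_of_nonneg (fderiv_comp_wfun_single_nonneg hη hmono hd k)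

lemma sum_abs_fderiv_comp_wfun {η : ℝ} (hη : 0 < η)
    (hmono : MonotoneOn h (Icc (wfun r x) (wfun r x + η)) ∨
      AntitoneOn h (Icc (wfun r x) (wfun r x + η)))
    (hd : DifferentiableAt ℝ (fun y => h (wfun r y)) x) :
    ∑ k, |fderiv ℝ (fun y => h (wfun r y)) x (Pi.single k 1)| = |deriv h (wfun r x)| := by
  rcases hmono with hmono | hanti
  · rw [← sum_abs_fderiv_comp_wfun_of_monotoneOn hη hmono hd, abs_of_nonneg (by positivity)]
  · have := sum_abs_fderiv_comp_wfun_of_monotoneOn (h := fun s => -h s) hη hanti.neg hd.neg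
    simp only [fderiv_fun_neg, deriv.fun_neg, neg_apply, abs_neg] at this
    rw [this, ← abs_neg (deriv h _), abs_of_nonneg (by rw [← this]; positivity)]

end comp_wfun

theorem stmt1 (p : ℕ) (hp : 0 < p) (r : Fin p → ℝ) (δ ε : ℝ) (hδ : 0 ≤ δ) (hε : 0 < ε) :
    (∃ K : NNReal, LipschitzWith K (fcut r δ ε)) ∧
    (∀ x, 0 ≤ fcut r δ ε x ∧ fcut r δ ε x ≤ 1) ∧
    (∀ x, x ∈ slab r δ → 1 ≤ fcut r δ ε x) ∧
    (∀ x, DifferentiableAt ℝ (fcut r δ ε) x →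
      ∑ k, |fderiv ℝ (fcut r δ ε) x (Pi.single k 1)| =
        (1 / ε) * ((if x ∈ slab (fun k => r k - (δ + ε / 2)) (ε / 2) then 1 else 0)
          + (if x ∈ slab (fun k => r k + (δ + ε / 2)) (ε / 2) then 1 else 0))) := by
  have : Nonempty (Fin p) := Fin.pos_iff_nonempty.mp hp
  rw [show fcut r δ ε = fun x => trapezoid δ ε (wfun r x) from
    funext (fcut_eq_trapezoid hδ hε r)]
  refine ⟨⟨_, (trapezoid_lipschitz hε).comp (wfun_lipschitz r)⟩,
    fun x => ⟨trapezoid_nonneg _, trapezoid_le_one _⟩, fun x hx => ?_, fun x hd => ?_⟩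
  · rw [mem_slab_iff] at hx
    exact (trapezoid_eq_one hε (abs_le.2 ⟨hx.1.le, hx.2⟩)).ge
  have hslab₁ : x ∈ slab (fun k => r k - (δ + ε / 2)) (ε / 2) ↔
      -δ - ε < wfun r x ∧ wfun r x ≤ -δ := by
    rw [mem_slab_iff, wfun_sub_const_left]
    constructor <;> rintro ⟨h₁, h₂⟩ <;> constructor <;> linarith
  have hslab₂ : x ∈ slab (fun k => r k + (δ + ε / 2)) (ε / 2) ↔
      δ < wfun r x ∧ wfun r x ≤ δ + ε := by
    rw [mem_slab_iff, wfun_add_const_left]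
    constructor <;> rintro ⟨h₁, h₂⟩ <;> constructor <;> linarith
  obtain ⟨η, hη, hmono⟩ := trapezoid_monotoneOn_or_antitoneOn_Icc hε (wfun r x) (δ := δ)
  rw [sum_abs_fderiv_comp_wfun hη hmono hd, abs_deriv_trapezoid hδ hε
    (hasDerivAt_of_differentiableAt_comp_wfun hd).differentiableAt]
  simp only [hslab₁, hslab₂]
end

section
/- Let φ_{r,ε}(x) = P[x + εZ ≤ r] with Z standard Gaussian in R^p. Then for all x ∈ R^p, ‖∇³φ_{r,ε}(x)‖_1 ≤ C·(log(ep))^{3/2}/ε³ for an absolute constant C > 0, where ‖∇³φ_{r,ε}(x)‖_1 denotes the sum of absolute values of all third-order partial derivatives. -/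
open MeasureTheory ProbabilityTheory Real
open scoped Classical

/-- `φ_{r,ε}(x) = P[x + εZ ≤ r]` for `Z` standard Gaussian in `ℝ^p`. -/
noncomputable def phi (p : ℕ) (r : Fin p → ℝ) (ε : ℝ) (x : Fin p → ℝ) : ℝ :=
  ((stdGaussian (Fin p)) {z | ∀ k, x k + ε * z k ≤ r k}).toReal

/-!
Since `Z` has independent coordinates, `φ_{r,ε}(x) = ∏ₖ Φ((rₖ - xₖ)/ε)` is a product of
one-variable functions, so `∂ₐ∂_b∂_c φ` is again such a product, in which coordinate `k` carries the
`mₖ`-th derivative of its factor, `mₖ` being the multiplicity of `k` in `(a, b, c)`.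

Put `u = (rₖ - xₖ)/ε`, `T = 2 √(log (e p))` and `A = 5 (1 + T)`. Each derivative of order
`1 ≤ m ≤ 3` of `Φ` is bounded by `Aᵐ (1 - Φ(u) + 1/p)`: for `u ≤ 0` because `1 - Φ(u) ≥ 1/2`,
on `[0, T]` by a Mills-ratio bound for the Gaussian tail, and beyond `T` because
`e^{-T²/2} ≤ 1/p`. The factors without derivative are bounded by `Φ(u)`. Summing over `(a, b, c)`
and grouping by the set `{a, b, c}` gives at most `27 (A/ε)³` times the expansion over subsets of
`∏ₖ ((1 - Φ(uₖ) + 1/p) + Φ(uₖ)) = (1 + 1/p)ᵖ ≤ e`.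
-/

open Finset
open scoped ContDiff

section ProdIteratedDeriv

variable {ι : Type*} [Fintype ι] {f : ι → ℝ → ℝ}

noncomputable def prodIteratedDeriv (f : ι → ℝ → ℝ) (m : ι → ℕ) (x : ι → ℝ) : ℝ :=
  ∏ k, iteratedDeriv (m k) (f k) (x k)

theorem contDiff_prodIteratedDeriv (hf : ∀ k, ContDiff ℝ ∞ (f k)) (m : ι → ℕ) :
    ContDiff ℝ ∞ (prodIteratedDeriv f m) := by
  refine contDiff_prod fun k _ => ?_
  rw [iteratedDeriv_eq_iterate]
  exact ((hf k).iterate_deriv (m k)).comp (contDiff_apply ℝ ℝ k)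

variable [DecidableEq ι]

theorem fderiv_prodIteratedDeriv_single (hf : ∀ k, ContDiff ℝ ∞ (f k)) (m : ι → ℕ) (c : ι)
    (x : ι → ℝ) :
    fderiv ℝ (prodIteratedDeriv f m) x (Pi.single c 1) =
      prodIteratedDeriv f (m + Pi.single c 1) x := by
  have hderiv (k : ι) : HasFDerivAt (fun y : ι → ℝ => iteratedDeriv (m k) (f k) (y k))
      (iteratedDeriv (m k + 1) (f k) (x k) •
        ContinuousLinearMap.proj (R := ℝ) (φ := fun _ : ι => ℝ) k) x := by
    rw [iteratedDeriv_succ]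
    exact ((hf k).differentiable_iteratedDeriv (m k) (mod_cast ENat.natCast_lt_top _)
      (x k)).hasDerivAt.comp_hasFDerivAt (f := fun y : ι → ℝ => y k) x (hasFDerivAt_apply k x)
  unfold prodIteratedDeriv
  rw [(HasFDerivAt.finsetProd fun k _ => hderiv k).fderiv]
  simp only [_root_.sum_apply, smul_apply, ContinuousLinearMap.proj_apply, Pi.single_apply,
    smul_eq_mul, mul_ite, mul_one, mul_zero, sum_ite_eq', mem_univ, ↓reduceIte, Pi.add_apply,
    ← mul_prod_erase univ _ (mem_univ c)]
  rw [mul_comm]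
  refine congrArg _ (prod_congr rfl fun k hk => ?_)
  rw [if_neg (ne_of_mem_erase hk), add_zero]

theorem iteratedFDeriv_prodIteratedDeriv_single (hf : ∀ k, ContDiff ℝ ∞ (f k)) (n : ℕ)
    (m : ι → ℕ) (c : Fin n → ι) (x : ι → ℝ) :
    iteratedFDeriv ℝ n (prodIteratedDeriv f m) x (fun i => Pi.single (c i) 1) =
      prodIteratedDeriv f (m + ∑ i, Pi.single (c i) 1) x := by
  induction n generalizing m x with
  | zero => simp
  | succ n ih =>
    rw [iteratedFDeriv_succ_apply_left, ← fderiv_continuousMultilinear_apply_const_apply]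
    · change fderiv ℝ (fun y => iteratedFDeriv ℝ n _ y fun i => Pi.single (Fin.tail c i) 1) x _ = _
      rw [funext (ih m (Fin.tail c)), fderiv_prodIteratedDeriv_single hf, Fin.sum_univ_succ]
      simp only [Fin.tail]
      abel_nf
    · exact (contDiff_prodIteratedDeriv hf m).differentiable_iteratedFDeriv
        (mod_cast ENat.natCast_lt_top _) x

end ProdIteratedDeriv

section Multiplicities

variable {ι : Type*} [DecidableEq ι] {n : ℕ}

theorem sum_pi_single_one_apply (c : Fin n → ι) (k : ι) :
    (∑ i, Pi.single (c i) 1 : ι → ℕ) k = #{i | c i = k} := by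
  simp [Pi.single_apply, eq_comm]

variable [Fintype ι]

theorem sum_comp_image_le (h : Finset ι → ℝ) (hh : ∀ S, 0 ≤ h S) :
    ∑ c : Fin n → ι, h (univ.image c) ≤ n ^ n * ∑ S ∈ univ.powerset, h S := by
  rw [← sum_fiberwise_of_maps_to' (t := univ.powerset) (g := fun c => univ.image c)
    (fun c _ => mem_powerset.2 (subset_univ _)), mul_sum]
  refine sum_le_sum fun S _ => ?_
  rw [sum_const, nsmul_eq_mul]
  refine mul_le_mul_of_nonneg_right ?_ (hh S)
  obtain hempty | ⟨c₀, hc₀⟩ :=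
    (univ.filter fun c : Fin n → ι => univ.image c = S).eq_empty_or_nonempty
  · simp [hempty]
  have hS : #S ≤ n := by
    rw [← (mem_filter.1 hc₀).2]
    simpa using card_image_le (s := univ) (f := c₀)
  have hsub : (univ.filter fun c : Fin n → ι => univ.image c = S) ⊆
      Fintype.piFinset fun _ => S :=
    fun c hc => Fintype.mem_piFinset.2 fun i =>
      (mem_filter.1 hc).2 ▸ mem_image_of_mem c (mem_univ i)
  exact_mod_cast (card_le_card hsub).trans (by simpa using Nat.pow_le_pow_left hS n)

variable {w : ι → ℕ → ℝ} {v G : ι → ℝ} {L : ℝ}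

theorem abs_prod_le_of_multiplicity (hw₀ : ∀ k, |w k 0| ≤ G k)
    (hw : ∀ k j, 1 ≤ j → j ≤ n → |w k j| ≤ L ^ j * v k) (c : Fin n → ι) :
    |∏ k, w k #{i | c i = k}| ≤
      L ^ n * ((∏ k ∈ univ.image c, v k) * ∏ k ∈ univ \ univ.image c, G k) := by
  set S := univ.image c
  have hcount : ∑ k ∈ S, #{i | c i = k} = n := by
    rw [← card_eq_sum_card_fiberwise fun i _ => mem_image_of_mem c (mem_univ i)]
    simp
  have hin : ∏ k ∈ S, |w k #{i | c i = k}| ≤ L ^ n * ∏ k ∈ S, v k := by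
    calc ∏ k ∈ S, |w k #{i | c i = k}| ≤ ∏ k ∈ S, (L ^ #{i | c i = k} * v k) := by
          refine prod_le_prod (fun _ _ => abs_nonneg _) fun k hk => hw k _ ?_ ?_
          · obtain ⟨i, -, rfl⟩ := mem_image.1 hk
            exact card_pos.2 ⟨i, by simp⟩
          · simpa using card_filter_le univ fun i => c i = k
      _ = L ^ n * ∏ k ∈ S, v k := by rw [prod_mul_distrib, prod_pow_eq_pow_sum, hcount]
  have hout : ∏ k ∈ univ \ S, |w k #{i | c i = k}| ≤ ∏ k ∈ univ \ S, G k := by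
    refine prod_le_prod (fun _ _ => abs_nonneg _) fun k hk => ?_
    have : #{i | c i = k} = 0 := by simpa [S] using (mem_sdiff.1 hk).2
    exact this ▸ hw₀ k
  rw [abs_prod, ← prod_sdiff (subset_univ S)]
  calc (∏ k ∈ univ \ S, |w k #{i | c i = k}|) * ∏ k ∈ S, |w k #{i | c i = k}|
      ≤ (∏ k ∈ univ \ S, G k) * (L ^ n * ∏ k ∈ S, v k) :=
        mul_le_mul hout hin (prod_nonneg fun _ _ => abs_nonneg _)
          (prod_nonneg fun k _ => (abs_nonneg _).trans (hw₀ k))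
    _ = _ := by ring

theorem sum_abs_prod_le_of_multiplicity (hL : 0 ≤ L) (hv : ∀ k, 0 ≤ v k)
    (hw₀ : ∀ k, |w k 0| ≤ G k) (hw : ∀ k j, 1 ≤ j → j ≤ n → |w k j| ≤ L ^ j * v k) :
    ∑ c : Fin n → ι, |∏ k, w k #{i | c i = k}| ≤ n ^ n * L ^ n * ∏ k, (v k + G k) := by
  have hG (k : ι) : 0 ≤ G k := (abs_nonneg _).trans (hw₀ k)
  have hterm (S : Finset ι) : 0 ≤ (∏ k ∈ S, v k) * ∏ k ∈ univ \ S, G k :=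
    mul_nonneg (prod_nonneg fun k _ => hv k) (prod_nonneg fun k _ => hG k)
  calc ∑ c : Fin n → ι, |∏ k, w k #{i | c i = k}|
      ≤ L ^ n * ∑ c : Fin n → ι,
          (∏ k ∈ univ.image c, v k) * ∏ k ∈ univ \ univ.image c, G k := by
        rw [mul_sum]
        exact sum_le_sum fun c _ => abs_prod_le_of_multiplicity hw₀ hw c
    _ ≤ L ^ n * (n ^ n * ∑ S ∈ univ.powerset, (∏ k ∈ S, v k) * ∏ k ∈ univ \ S, G k) :=
        mul_le_mul_of_nonneg_left (sum_comp_image_le _ hterm) (pow_nonneg hL n)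
    _ = n ^ n * L ^ n * ∏ k, (v k + G k) := by rw [prod_add]; ring

end Multiplicities

noncomputable def stdNormalPDF (u : ℝ) : ℝ := (√(2 * π))⁻¹ * exp (-u ^ 2 / 2)

noncomputable def stdNormalCDF (t : ℝ) : ℝ := ∫ u in Set.Iic t, stdNormalPDF u

theorem stdNormalPDF_eq_gaussianPDFReal : stdNormalPDF = gaussianPDFReal 0 1 := by
  funext u
  simp [gaussianPDFReal, stdNormalPDF]

theorem stdNormalPDF_nonneg (u : ℝ) : 0 ≤ stdNormalPDF u := by
  unfold stdNormalPDF
  positivity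

theorem stdNormalPDF_le_exp (u : ℝ) : stdNormalPDF u ≤ exp (-u ^ 2 / 2) := by
  have h : 1 ≤ √(2 * π) := Real.one_le_sqrt.2 (by linarith [pi_gt_three])
  exact mul_le_of_le_one_left (exp_nonneg _) (inv_le_one_of_one_le₀ h)

theorem integrable_stdNormalPDF : Integrable stdNormalPDF := by
  rw [stdNormalPDF_eq_gaussianPDFReal]
  exact integrable_gaussianPDFReal 0 1

theorem integral_stdNormalPDF : ∫ u, stdNormalPDF u = 1 := by
  rw [stdNormalPDF_eq_gaussianPDFReal]
  exact integral_gaussianPDFReal_eq_one 0 one_ne_zero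

theorem contDiff_stdNormalPDF : ContDiff ℝ ∞ stdNormalPDF := by
  unfold stdNormalPDF
  fun_prop

theorem hasDerivAt_stdNormalPDF (u : ℝ) :
    HasDerivAt stdNormalPDF (-u * stdNormalPDF u) u := by
  have h := ((((hasDerivAt_pow 2 u).fun_neg).div_const 2).exp).const_mul (√(2 * π))⁻¹
  refine h.congr_deriv ?_
  simp only [stdNormalPDF]
  ring

theorem stdNormalPDF_antitoneOn : AntitoneOn stdNormalPDF (Set.Ici 0) := by
  intro a ha b _ hab
  unfold stdNormalPDF
  gcongr

theorem one_sub_stdNormalCDF (t : ℝ) : 1 - stdNormalCDF t = ∫ u in Set.Ioi t, stdNormalPDF u := by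
  rw [← integral_stdNormalPDF, ← integral_add_compl measurableSet_Iic integrable_stdNormalPDF,
    Set.compl_Iic, stdNormalCDF, add_sub_cancel_left]

theorem stdNormalCDF_nonneg (t : ℝ) : 0 ≤ stdNormalCDF t :=
  setIntegral_nonneg measurableSet_Iic fun u _ => stdNormalPDF_nonneg u

theorem stdNormalCDF_le_one (t : ℝ) : stdNormalCDF t ≤ 1 := by
  rw [← sub_nonneg, one_sub_stdNormalCDF]
  exact setIntegral_nonneg measurableSet_Ioi fun u _ => stdNormalPDF_nonneg u

theorem monotone_stdNormalCDF : Monotone stdNormalCDF := fun _ _ h =>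
  setIntegral_mono_set integrable_stdNormalPDF.integrableOn
    (.of_forall stdNormalPDF_nonneg) (.of_forall (Set.Iic_subset_Iic.2 h))

theorem stdNormalCDF_zero : stdNormalCDF 0 = 1 / 2 := by
  have hsymm : ∫ u in Set.Ioi (0 : ℝ), stdNormalPDF u = stdNormalCDF 0 := by
    rw [stdNormalCDF, ← neg_zero, ← integral_comp_neg_Iic]
    simp [stdNormalPDF]
  linarith [one_sub_stdNormalCDF 0]

theorem hasDerivAt_stdNormalCDF (t : ℝ) : HasDerivAt stdNormalCDF (stdNormalPDF t) t := by
  have hcont := contDiff_stdNormalPDF.continuous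
  have key : ∀ s, stdNormalCDF s = stdNormalCDF 0 + ∫ u in (0 : ℝ)..s, stdNormalPDF u := fun s => by
    rw [← intervalIntegral.integral_Iic_sub_Iic integrable_stdNormalPDF.integrableOn
      integrable_stdNormalPDF.integrableOn, stdNormalCDF, stdNormalCDF, add_sub_cancel]
  rw [funext key]
  exact (intervalIntegral.integral_hasDerivAt_right (hcont.intervalIntegrable _ _)
    hcont.aestronglyMeasurable.stronglyMeasurableAtFilter hcont.continuousAt).const_add _

theorem contDiff_stdNormalCDF : ContDiff ℝ ∞ stdNormalCDF := by
  rw [contDiff_infty_iff_deriv]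
  refine ⟨fun t => (hasDerivAt_stdNormalCDF t).differentiableAt, ?_⟩
  rw [funext fun t => (hasDerivAt_stdNormalCDF t).deriv]
  exact contDiff_stdNormalPDF

theorem deriv_stdNormalCDF : deriv stdNormalCDF = stdNormalPDF :=
  funext fun t => (hasDerivAt_stdNormalCDF t).deriv

theorem deriv_stdNormalPDF : deriv stdNormalPDF = fun u => -u * stdNormalPDF u :=
  funext fun u => (hasDerivAt_stdNormalPDF u).deriv

theorem deriv_mul_stdNormalPDF :
    deriv (fun u => -u * stdNormalPDF u) = fun u => (u ^ 2 - 1) * stdNormalPDF u :=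
  funext fun u =>
    ((hasDerivAt_id u).neg.mul (hasDerivAt_stdNormalPDF u)).deriv.trans (by simp; ring)

theorem abs_iteratedDeriv_stdNormalCDF_le_mul_pdf {m : ℕ} (hm₁ : 1 ≤ m) (hm₃ : m ≤ 3) (u : ℝ) :
    |iteratedDeriv m stdNormalCDF u| ≤ (1 + |u|) ^ (m - 1) * stdNormalPDF u := by
  have hpdf := stdNormalPDF_nonneg u
  interval_cases m <;>
    simp only [iteratedDeriv_succ, iteratedDeriv_zero, deriv_stdNormalCDF, deriv_stdNormalPDF,
      deriv_mul_stdNormalPDF, abs_mul, abs_of_nonneg hpdf, abs_neg, Nat.reduceSub]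
  · simp
  · gcongr
    simp
  · gcongr
    rw [abs_le]
    constructor <;> nlinarith [abs_nonneg u, sq_abs u]

theorem sub_mul_stdNormalPDF_le_tail {u w : ℝ} (hu : 0 ≤ u) (huw : u ≤ w) :
    (w - u) * stdNormalPDF w ≤ 1 - stdNormalCDF u := by
  rw [one_sub_stdNormalCDF]
  calc (w - u) * stdNormalPDF w = ∫ _ in u..w, stdNormalPDF w := by simp
    _ ≤ ∫ x in u..w, stdNormalPDF x :=
        intervalIntegral.integral_mono_on huw (by simp) integrable_stdNormalPDF.intervalIntegrable
          fun x hx => stdNormalPDF_antitoneOn (hu.trans hx.1) (hu.trans huw) hx.2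
    _ = ∫ x in Set.Ioc u w, stdNormalPDF x := intervalIntegral.integral_of_le huw
    _ ≤ ∫ x in Set.Ioi u, stdNormalPDF x :=
        setIntegral_mono_set integrable_stdNormalPDF.integrableOn
          (.of_forall stdNormalPDF_nonneg) (.of_forall Set.Ioc_subset_Ioi_self)

theorem stdNormalPDF_le_five_mul_tail {u : ℝ} (hu : 0 ≤ u) :
    stdNormalPDF u ≤ 5 * (1 + u) * (1 - stdNormalCDF u) := by
  set δ := (1 + u)⁻¹
  have hδ : 0 < δ := by positivity
  have hδu : (1 + u) * δ = 1 := mul_inv_cancel₀ (by positivity)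
  have hexp : exp (3 / 2) ≤ 5 := by
    have h : exp (3 / 2) ^ 2 = exp 1 ^ 3 := by rw [← exp_nat_mul, ← exp_nat_mul]; norm_num
    have h25 : exp 1 ^ 3 < 25 :=
      (pow_lt_pow_left₀ exp_one_lt_d9 (exp_pos 1).le three_ne_zero).trans (by norm_num)
    nlinarith [exp_pos (3 / 2)]
  -- on `[u, u + δ]` the density drops by at most the factor `e^{3/2} ≤ 5`
  have hshift : stdNormalPDF u ≤ 5 * stdNormalPDF (u + δ) := by
    have hsq : -u ^ 2 / 2 ≤ 3 / 2 + -(u + δ) ^ 2 / 2 := by nlinarith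
    calc stdNormalPDF u ≤ (√(2 * π))⁻¹ * (exp (3 / 2) * exp (-(u + δ) ^ 2 / 2)) := by
          rw [← exp_add]
          unfold stdNormalPDF
          gcongr
      _ ≤ (√(2 * π))⁻¹ * (5 * exp (-(u + δ) ^ 2 / 2)) := by gcongr
      _ = 5 * stdNormalPDF (u + δ) := by unfold stdNormalPDF; ring
  calc stdNormalPDF u ≤ 5 * stdNormalPDF (u + δ) := hshift
    _ = 5 * (1 + u) * ((u + δ - u) * stdNormalPDF (u + δ)) := by
        rw [add_sub_cancel_left, ← mul_assoc, mul_assoc 5, hδu, mul_one]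
    _ ≤ 5 * (1 + u) * (1 - stdNormalCDF u) := by
        gcongr
        exact sub_mul_stdNormalPDF_le_tail hu (by linarith)

theorem one_add_abs_sq_mul_exp_le_three (u : ℝ) : (1 + |u|) ^ 2 * exp (-u ^ 2 / 2) ≤ 3 := by
  rw [neg_div, exp_neg, ← div_eq_mul_inv, div_le_iff₀ (exp_pos _)]
  nlinarith [add_one_le_exp (u ^ 2 / 2), sq_abs u, sq_nonneg (|u| - 2)]

theorem one_add_pow_mul_exp_le {j : ℕ} {T u : ℝ} (hjT : (j : ℝ) ≤ T) (hTu : T ≤ u) :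
    (1 + u) ^ j * exp (-u ^ 2 / 2) ≤ (1 + T) ^ j * exp (-T ^ 2 / 2) := by
  have hj : (0 : ℝ) ≤ j := j.cast_nonneg
  have hs : 0 ≤ u - T := sub_nonneg.2 hTu
  have hbase : 1 + u ≤ (1 + T) * exp (u - T) := by
    nlinarith [add_one_le_exp (u - T), mul_nonneg (hj.trans hjT) hs]
  have hexp : -u ^ 2 / 2 ≤ -T ^ 2 / 2 + -(j * (u - T)) := by
    nlinarith [mul_le_mul_of_nonneg_right hjT hs]
  calc (1 + u) ^ j * exp (-u ^ 2 / 2)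
      ≤ ((1 + T) * exp (u - T)) ^ j * exp (-T ^ 2 / 2 + -(j * (u - T))) := by
        have hT : 0 ≤ 1 + T := by linarith
        gcongr
        linarith
    _ = (1 + T) ^ j * exp (-T ^ 2 / 2) := by
        rw [mul_pow, ← exp_nat_mul, exp_add, exp_neg]
        field_simp

theorem one_add_abs_pow_mul_stdNormalPDF_le {j : ℕ} (hj : j ≤ 2) {T N : ℝ} (hT : 2 ≤ T)
    (hTN : exp (-T ^ 2 / 2) ≤ N⁻¹) (u : ℝ) :
    (1 + |u|) ^ j * stdNormalPDF u ≤ (5 * (1 + T)) ^ (j + 1) * (1 - stdNormalCDF u + N⁻¹) := by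
  have hN : 0 ≤ N⁻¹ := (exp_pos _).le.trans hTN
  have htail : 0 ≤ 1 - stdNormalCDF u := sub_nonneg.2 (stdNormalCDF_le_one u)
  have hpdf := stdNormalPDF_nonneg u
  rcases le_or_gt u 0 with hu | hu
  · have hhalf : 1 / 2 ≤ 1 - stdNormalCDF u := by
      linarith [monotone_stdNormalCDF hu, stdNormalCDF_zero]
    have h15 : 15 ≤ (5 * (1 + T)) ^ (j + 1) :=
      (by linarith : (15 : ℝ) ≤ 5 * (1 + T)).trans (le_self_pow₀ (by linarith) j.succ_ne_zero)
    calc (1 + |u|) ^ j * stdNormalPDF u ≤ (1 + |u|) ^ 2 * exp (-u ^ 2 / 2) := by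
          gcongr
          · simp
          · exact stdNormalPDF_le_exp u
      _ ≤ 15 * (1 / 2) := by linarith [one_add_abs_sq_mul_exp_le_three u]
      _ ≤ (5 * (1 + T)) ^ (j + 1) * (1 - stdNormalCDF u + N⁻¹) := by gcongr; linarith
  rw [abs_of_pos hu]
  rcases le_or_gt u T with huT | huT
  · calc (1 + u) ^ j * stdNormalPDF u ≤ (1 + u) ^ j * (5 * (1 + u) * (1 - stdNormalCDF u)) := by
          gcongr
          exact stdNormalPDF_le_five_mul_tail hu.le
      _ = 5 * (1 + u) ^ (j + 1) * (1 - stdNormalCDF u) := by ring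
      _ ≤ 5 ^ (j + 1) * (1 + T) ^ (j + 1) * (1 - stdNormalCDF u + N⁻¹) := by
          gcongr
          · exact le_self_pow₀ (by norm_num) j.succ_ne_zero
          · linarith
      _ = (5 * (1 + T)) ^ (j + 1) * (1 - stdNormalCDF u + N⁻¹) := by rw [mul_pow]
  · have hjT : (j : ℝ) ≤ T := by
      have : (j : ℝ) ≤ 2 := by exact_mod_cast hj
      linarith
    calc (1 + u) ^ j * stdNormalPDF u ≤ (1 + u) ^ j * exp (-u ^ 2 / 2) := by
          gcongr
          exact stdNormalPDF_le_exp u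
      _ ≤ (1 + T) ^ j * exp (-T ^ 2 / 2) := one_add_pow_mul_exp_le hjT huT.le
      _ ≤ (5 * (1 + T)) ^ (j + 1) * N⁻¹ := by
          gcongr
          calc (1 + T) ^ j ≤ (5 * (1 + T)) ^ j := by gcongr; linarith
            _ ≤ (5 * (1 + T)) ^ (j + 1) := pow_le_pow_right₀ (by linarith) j.le_succ
      _ ≤ (5 * (1 + T)) ^ (j + 1) * (1 - stdNormalCDF u + N⁻¹) := by gcongr; linarith

theorem abs_iteratedDeriv_stdNormalCDF_le {m : ℕ} (hm₁ : 1 ≤ m) (hm₃ : m ≤ 3) {T N : ℝ}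
    (hT : 2 ≤ T) (hTN : exp (-T ^ 2 / 2) ≤ N⁻¹) (u : ℝ) :
    |iteratedDeriv m stdNormalCDF u| ≤ (5 * (1 + T)) ^ m * (1 - stdNormalCDF u + N⁻¹) := by
  obtain ⟨j, rfl⟩ : ∃ j, m = j + 1 := ⟨m - 1, by omega⟩
  simpa using (abs_iteratedDeriv_stdNormalCDF_le_mul_pdf hm₁ hm₃ u).trans
    (one_add_abs_pow_mul_stdNormalPDF_le (by omega) hT hTN u)

theorem sum_pi_fin_three {α M : Type*} [Fintype α] [AddCommMonoid M] (F : (Fin 3 → α) → M) :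
    ∑ c, F c = ∑ a, ∑ b, ∑ c, F ![a, b, c] := by
  simp only [← (Fin.consEquiv fun _ => α).sum_comp, Fintype.sum_prod_type]
  simp only [univ_unique, Fin.consEquiv, Equiv.coe_fn_mk, sum_singleton]
  rfl

theorem abs_iteratedDeriv_comp_mul_sub {g : ℝ → ℝ} (hg : ContDiff ℝ ∞ g) (m : ℕ) (c a t : ℝ) :
    |iteratedDeriv m (fun t => g (c * (a - t))) t| =
      |c| ^ m * |iteratedDeriv m g (c * (a - t))| := by
  rw [iteratedDeriv_comp_const_sub m (fun z => g (c * z)) a,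
    iteratedDeriv_comp_const_mul (hg.of_le (mod_cast (ENat.natCast_lt_top m).le)) c]
  simp [abs_mul, abs_pow]

theorem phi_eq_prod {p : ℕ} (r : Fin p → ℝ) {ε : ℝ} (hε : 0 < ε) (x : Fin p → ℝ) :
    phi p r ε x = ∏ k, stdNormalCDF (ε⁻¹ * (r k - x k)) := by
  have hset : {z : Fin p → ℝ | ∀ k, x k + ε * z k ≤ r k} =
      Set.univ.pi fun k => Set.Iic (ε⁻¹ * (r k - x k)) := by
    ext z
    simp only [Set.mem_ofPred_eq, Set.mem_pi, Set.mem_univ, true_implies, Set.mem_Iic]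
    refine forall_congr' fun k => ?_
    rw [← div_eq_inv_mul, le_div_iff₀ hε]
    constructor <;> intro h <;> linarith
  rw [phi, _root_.stdGaussian, hset, Measure.pi_pi, ENNReal.toReal_prod]
  refine prod_congr rfl fun k _ => ?_
  rw [gaussianReal_apply_eq_integral 0 one_ne_zero, ENNReal.toReal_ofReal
    (setIntegral_nonneg measurableSet_Iic fun u _ => gaussianPDFReal_nonneg 0 1 u),
    stdNormalCDF, stdNormalPDF_eq_gaussianPDFReal]

theorem iteratedFDeriv_phi_pi_single {p : ℕ} (r : Fin p → ℝ) {ε : ℝ} (hε : 0 < ε) (n : ℕ)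
    (c : Fin n → Fin p) (x : Fin p → ℝ) :
    iteratedFDeriv ℝ n (phi p r ε) x (fun i => Pi.single (c i) 1) =
      ∏ k, iteratedDeriv #{i | c i = k} (fun t => stdNormalCDF (ε⁻¹ * (r k - t))) (x k) := by
  have hphi : phi p r ε = prodIteratedDeriv (fun k t => stdNormalCDF (ε⁻¹ * (r k - t))) 0 :=
    funext fun y => by simp [prodIteratedDeriv, phi_eq_prod r hε]
  have hf (k : Fin p) : ContDiff ℝ ∞ fun t => stdNormalCDF (ε⁻¹ * (r k - t)) :=
    contDiff_stdNormalCDF.comp (by fun_prop)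
  rw [hphi, iteratedFDeriv_prodIteratedDeriv_single hf, zero_add]
  simp only [prodIteratedDeriv, sum_pi_single_one_apply]

theorem sum_abs_iteratedFDeriv_phi_le {p : ℕ} (r : Fin p → ℝ) {ε : ℝ} (hε : 0 < ε)
    (x : Fin p → ℝ) {T : ℝ} (hT : 2 ≤ T) (hTp : exp (-T ^ 2 / 2) ≤ (p : ℝ)⁻¹) :
    ∑ a : Fin p, ∑ b : Fin p, ∑ c : Fin p,
        |iteratedFDeriv ℝ 3 (phi p r ε) x ![Pi.single a 1, Pi.single b 1, Pi.single c 1]| ≤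
      81 * (5 * (1 + T)) ^ 3 / ε ^ 3 := by
  set f : Fin p → ℝ → ℝ := fun k t => stdNormalCDF (ε⁻¹ * (r k - t))
  set u : Fin p → ℝ := fun k => ε⁻¹ * (r k - x k)
  have hderiv (a b c : Fin p) : iteratedFDeriv ℝ 3 (phi p r ε) x
      ![Pi.single a 1, Pi.single b 1, Pi.single c 1] =
        ∏ k, iteratedDeriv #{i | ![a, b, c] i = k} (f k) (x k) := by
    have hvec : ![Pi.single a 1, Pi.single b 1, Pi.single c 1] =
        fun i => (Pi.single (![a, b, c] i) 1 : Fin p → ℝ) := by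
      ext i : 1
      fin_cases i <;> rfl
    rw [hvec, iteratedFDeriv_phi_pi_single r hε]
  have hw (k : Fin p) (j : ℕ) (hj₁ : 1 ≤ j) (hj₃ : j ≤ 3) :
      |iteratedDeriv j (f k) (x k)| ≤
        (ε⁻¹ * (5 * (1 + T))) ^ j * (1 - stdNormalCDF (u k) + (p : ℝ)⁻¹) := by
    rw [abs_iteratedDeriv_comp_mul_sub contDiff_stdNormalCDF, abs_of_pos (inv_pos.2 hε), mul_pow,
      mul_assoc]
    gcongr
    exact abs_iteratedDeriv_stdNormalCDF_le hj₁ hj₃ hT hTp _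
  have hprod : ∏ k, ((1 - stdNormalCDF (u k) + (p : ℝ)⁻¹) + stdNormalCDF (u k)) ≤ 3 := by
    have hk (k : Fin p) :
        1 - stdNormalCDF (u k) + (p : ℝ)⁻¹ + stdNormalCDF (u k) = 1 + (p : ℝ)⁻¹ := by ring
    simp only [hk, prod_const, card_univ, Fintype.card_fin]
    exact Real.one_add_inv_pow_le_exp.trans (exp_one_lt_d9.le.trans (by norm_num))
  calc ∑ a : Fin p, ∑ b : Fin p, ∑ c : Fin p,
        |iteratedFDeriv ℝ 3 (phi p r ε) x ![Pi.single a 1, Pi.single b 1, Pi.single c 1]|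
      = ∑ c : Fin 3 → Fin p, |∏ k, iteratedDeriv #{i | c i = k} (f k) (x k)| := by
        rw [sum_pi_fin_three]
        simp only [hderiv]
    _ ≤ ((3 : ℕ) : ℝ) ^ 3 * (ε⁻¹ * (5 * (1 + T))) ^ 3 *
          ∏ k, ((1 - stdNormalCDF (u k) + (p : ℝ)⁻¹) + stdNormalCDF (u k)) := by
        refine sum_abs_prod_le_of_multiplicity (w := fun k j => iteratedDeriv j (f k) (x k))
          (v := fun k => 1 - stdNormalCDF (u k) + (p : ℝ)⁻¹) (G := fun k => stdNormalCDF (u k))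
          (by positivity) (fun k => ?_) (fun k => ?_) hw
        · linarith [stdNormalCDF_le_one (u k), inv_nonneg.2 (p.cast_nonneg (α := ℝ))]
        · simp [abs_of_nonneg (stdNormalCDF_nonneg _), f, u]
    _ ≤ ((3 : ℕ) : ℝ) ^ 3 * (ε⁻¹ * (5 * (1 + T))) ^ 3 * 3 := by gcongr
    _ = 81 * (5 * (1 + T)) ^ 3 / ε ^ 3 := by field_simp; norm_num

theorem stmt17 :
    ∃ C : ℝ, 0 < C ∧
      ∀ (p : ℕ), 0 < p → ∀ (r : Fin p → ℝ) (ε : ℝ), 0 < ε →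
        ∀ x : Fin p → ℝ,
          ∑ a : Fin p, ∑ b : Fin p, ∑ c : Fin p,
              |iteratedFDeriv ℝ 3 (phi p r ε) x
                ![Pi.single a 1, Pi.single b 1, Pi.single c 1]| ≤
            C * Real.log (Real.exp 1 * p) ^ ((3 : ℝ) / 2) / ε ^ 3 := by
  refine ⟨81 * 15 ^ 3, by norm_num, fun p hp r ε hε x => ?_⟩
  have hp' : (1 : ℝ) ≤ p := mod_cast hp
  set L := log (exp 1 * p) with hLdef
  have hL : 1 ≤ L := by
    rw [hLdef, log_mul (exp_ne_zero 1) (by positivity), log_exp]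
    linarith [log_nonneg hp']
  have hsqrt : 1 ≤ √L := one_le_sqrt.2 hL
  have hTp : exp (-(2 * √L) ^ 2 / 2) ≤ (p : ℝ)⁻¹ := by
    calc exp (-(2 * √L) ^ 2 / 2) ≤ exp (-L) := by
          rw [mul_pow, sq_sqrt (by linarith)]
          gcongr
          linarith
      _ = (exp 1 * p)⁻¹ := by rw [exp_neg, exp_log (by positivity)]
      _ ≤ (p : ℝ)⁻¹ := by
          gcongr
          exact le_mul_of_one_le_left (by positivity) (by linarith [add_one_le_exp 1])
  calc _ ≤ 81 * (5 * (1 + 2 * √L)) ^ 3 / ε ^ 3 :=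
        sum_abs_iteratedFDeriv_phi_le r hε x (by linarith) hTp
    _ ≤ 81 * (15 * √L) ^ 3 / ε ^ 3 := by gcongr 81 * ?_ ^ 3 / _; linarith
    _ = 81 * 15 ^ 3 * L ^ ((3 : ℝ) / 2) / ε ^ 3 := by
        rw [mul_pow, sqrt_eq_rpow, ← rpow_mul_natCast (by linarith)]
        norm_num
        ring
end
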